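/- arXiv:2601.09604 — 7 statements merged into one kernel-verified Lean document; each statement's English description precedes it below -/
import Mathlib

section
/- For every 1 ≤ j ≤ n, the following relation holds among complete homogeneous and elementary symmetric polynomials: ∑_{i=0}^{n-j+1} (-1)^i H_i(v_1,…,v_j) e_{n-j+1-i}(v_1,…,v_n) = 0. -/
open MvPolynomial Finset

namespace CHAux

variable {n j : ℕ}

/-- The set of the first `j` variables. -/
def Sset (n j : ℕ) : Finset (Fin n) := univ.filter fun k : Fin n => (k : ℕ) < j

lemma card_Sset (hjn : j ≤ n) : (Sset n j).card = j := by
  have h : Sset n j = (univ : Finset (Fin j)).map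
      ⟨Fin.castLE hjn, Fin.castLE_injective hjn⟩ := by
    ext k
    simp only [Sset, mem_filter, mem_univ, true_and, mem_map,
      Function.Embedding.coeFn_mk]
    constructor
    · intro hk; exact ⟨⟨k, hk⟩, Fin.ext rfl⟩
    · rintro ⟨a, rfl⟩; exact a.2

  rw [h, card_map, card_univ, Fintype.card_fin]

/-- The support finset of a pair. -/
def sp (n j : ℕ) (p : Multiset (Fin n) × Finset (Fin n)) : Finset (Fin n) :=
  p.1.toFinset ∪ (p.2 ∩ Sset n j)

/-- The "good pair" predicate. -/
def Good (n j M : ℕ) (p : Multiset (Fin n) × Finset (Fin n)) : Prop :=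
  Multiset.card p.1 + p.2.card = M ∧ ∀ a ∈ p.1, a ∈ Sset n j

lemma sp_nonempty (hj1 : 1 ≤ j) (hjn : j ≤ n)
    {p : Multiset (Fin n) × Finset (Fin n)} (hp : Good n j (n - j + 1) p) :
    (sp n j p).Nonempty := by
  rw [Finset.nonempty_iff_ne_empty]
  intro h
  rw [sp, Finset.union_eq_empty] at h
  obtain ⟨h1, h2⟩ := h
  have hm : p.1 = 0 := by
    rwa [Multiset.toFinset_eq_empty] at h1
  have hsub : p.2 ⊆ univ \ Sset n j := by
    intro y hy
    rw [mem_sdiff]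
    refine ⟨mem_univ _, fun hyS => ?_⟩
    have : y ∈ p.2 ∩ Sset n j := mem_inter.mpr ⟨hy, hyS⟩
    simp [h2] at this
  have hcard : p.2.card ≤ n - j := by
    calc p.2.card ≤ (univ \ Sset n j).card := card_le_card hsub
    _ = n - j := by rw [card_sdiff_of_subset (subset_univ _), card_univ, Fintype.card_fin, card_Sset hjn]
  have := hp.1
  rw [hm] at this
  simp at this
  omega

end CHAux

namespace CHAux

variable {n j : ℕ}

/-- The involution. -/
noncomputable def gmap (n j : ℕ) (p : Multiset (Fin n) × Finset (Fin n))
    (h : (sp n j p).Nonempty) : Multiset (Fin n) × Finset (Fin n) :=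
  let x := (sp n j p).max' h
  if x ∈ p.2 then (x ::ₘ p.1, p.2.erase x) else (p.1.erase x, insert x p.2)

lemma max'_mem_S {p : Multiset (Fin n) × Finset (Fin n)}
    (hP : ∀ a ∈ p.1, a ∈ Sset n j) (h : (sp n j p).Nonempty) :
    (sp n j p).max' h ∈ Sset n j := by
  have h0 : (sp n j p).max' h ∈ p.1.toFinset ∪ (p.2 ∩ Sset n j) := (sp n j p).max'_mem h
  rcases mem_union.mp h0 with h1 | h2
  · exact hP _ (Multiset.mem_toFinset.mp h1)
  · exact (mem_inter.mp h2).2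

lemma max'_mem_fst {p : Multiset (Fin n) × Finset (Fin n)}
    (h : (sp n j p).Nonempty) (hx : (sp n j p).max' h ∉ p.2) :
    (sp n j p).max' h ∈ p.1 := by
  have h0 : (sp n j p).max' h ∈ p.1.toFinset ∪ (p.2 ∩ Sset n j) := (sp n j p).max'_mem h
  rcases mem_union.mp h0 with h1 | h2
  · exact Multiset.mem_toFinset.mp h1
  · exact absurd (mem_inter.mp h2).1 hx

lemma sp_gmap {p : Multiset (Fin n) × Finset (Fin n)}
    (hP : ∀ a ∈ p.1, a ∈ Sset n j) (h : (sp n j p).Nonempty) :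
    sp n j (gmap n j p h) = sp n j p := by
  classical
  set x := (sp n j p).max' h with hxdef
  have hxS : x ∈ Sset n j := max'_mem_S hP h
  have hxsp : x ∈ sp n j p := (sp n j p).max'_mem h
  rw [gmap]
  by_cases hxT : x ∈ p.2
  · simp only [← hxdef, hxT, if_pos]
    ext y
    simp only [sp, mem_union, Multiset.mem_toFinset, Multiset.mem_cons, mem_inter,
      mem_erase]
    rw [sp, mem_union, Multiset.mem_toFinset, mem_inter] at hxsp
    constructor
    · rintro (⟨rfl | hy⟩ | ⟨⟨hyx, hyT⟩, hyS⟩)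
      · rcases hxsp with h1 | h2
        · exact Or.inl h1
        · exact Or.inr h2
      · exact Or.inl hy
      · exact Or.inr ⟨hyT, hyS⟩
    · rintro (hy | ⟨hyT, hyS⟩)
      · exact Or.inl (Or.inr hy)
      · by_cases hyx : y = x
        · exact Or.inl (Or.inl hyx)
        · exact Or.inr ⟨⟨hyx, hyT⟩, hyS⟩
  · simp only [← hxdef, hxT, if_neg, not_false_iff]
    have hxm : x ∈ p.1 := max'_mem_fst h hxT
    ext y
    simp only [sp, mem_union, Multiset.mem_toFinset, mem_inter, mem_insert]
    constructor
    · rintro (hy | ⟨(rfl | hyT), hyS⟩)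
      · exact Or.inl (Multiset.mem_of_mem_erase hy)
      · exact Or.inl hxm
      · exact Or.inr ⟨hyT, hyS⟩
    · rintro (hy | ⟨hyT, hyS⟩)
      · by_cases hyx : y = x
        · subst hyx; exact Or.inr ⟨Or.inl rfl, hxS⟩
        · exact Or.inl ((Multiset.mem_erase_of_ne hyx).mpr hy)
      · exact Or.inr ⟨Or.inr hyT, hyS⟩

lemma gmap_good {M : ℕ} {p : Multiset (Fin n) × Finset (Fin n)}
    (hp : Good n j M p) (h : (sp n j p).Nonempty) :
    Good n j M (gmap n j p h) := by
  classical
  set x := (sp n j p).max' h with hxdef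
  have hxS : x ∈ Sset n j := max'_mem_S hp.2 h
  rw [gmap]
  by_cases hxT : x ∈ p.2
  · simp only [← hxdef, hxT, if_pos]
    refine ⟨?_, ?_⟩
    · show Multiset.card (x ::ₘ p.1) + (p.2.erase x).card = M
      have h1 : Multiset.card (x ::ₘ p.1) = Multiset.card p.1 + 1 :=
        Multiset.card_cons _ _
      have h2 : (p.2.erase x).card = p.2.card - 1 := card_erase_of_mem hxT
      have h3 : 1 ≤ p.2.card := card_pos.mpr ⟨x, hxT⟩
      have := hp.1
      omega
    · intro a ha
      rcases Multiset.mem_cons.mp ha with rfl | ha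
      · exact hxS
      · exact hp.2 a ha
  · simp only [← hxdef, hxT, if_neg, not_false_iff]
    have hxm : x ∈ p.1 := max'_mem_fst h hxT
    refine ⟨?_, ?_⟩
    · show Multiset.card (p.1.erase x) + (insert x p.2).card = M
      have h1 : Multiset.card (p.1.erase x) = Multiset.card p.1 - 1 :=
        Multiset.card_erase_of_mem hxm
      have h2 : (insert x p.2).card = p.2.card + 1 := card_insert_of_notMem hxT
      have h3 : 1 ≤ Multiset.card p.1 := Multiset.card_pos.mpr
        (fun h0 => by simp [h0] at hxm)
      have := hp.1
      omega
    · intro a ha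
      exact hp.2 a (Multiset.mem_of_mem_erase ha)

end CHAux

namespace CHAux

variable {n j : ℕ}

lemma max'_congr {s t : Finset (Fin n)} (hst : s = t) (hs : s.Nonempty)
    (ht : t.Nonempty) : s.max' hs = t.max' ht := by subst hst; rfl

lemma gmap_congr {q q' : Multiset (Fin n) × Finset (Fin n)} (hqq : q = q')
    (hq : (sp n j q).Nonempty) (hq' : (sp n j q').Nonempty) :
    gmap n j q hq = gmap n j q' hq' := by subst hqq; rfl

lemma gmap_gmap {p : Multiset (Fin n) × Finset (Fin n)}
    (hP : ∀ a ∈ p.1, a ∈ Sset n j) (h : (sp n j p).Nonempty)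
    (h' : (sp n j (gmap n j p h)).Nonempty) :
    gmap n j (gmap n j p h) h' = p := by
  classical
  have hs := sp_gmap hP h
  set x := (sp n j p).max' h with hx
  by_cases hxT : x ∈ p.2
  · have hgp : gmap n j p h = (x ::ₘ p.1, p.2.erase x) := by
      rw [gmap]; simp only [← hx, hxT, if_pos]
    have h2 : (sp n j (x ::ₘ p.1, p.2.erase x)).Nonempty := hgp ▸ h'
    rw [gmap_congr hgp h' h2]
    have hsp2 : sp n j (x ::ₘ p.1, p.2.erase x) = sp n j p := hgp ▸ hs
    have hmax : (sp n j (x ::ₘ p.1, p.2.erase x)).max' h2 = x :=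
      max'_congr hsp2 h2 h
    rw [gmap]
    simp only [hmax]
    have hnotmem : x ∉ (x ::ₘ p.1, p.2.erase x).2 := notMem_erase _ _
    simp only [if_neg hnotmem]
    ext1
    · exact Multiset.erase_cons_head _ _
    · exact insert_erase hxT
  · have hxm : x ∈ p.1 := max'_mem_fst h hxT
    have hgp : gmap n j p h = (p.1.erase x, insert x p.2) := by
      rw [gmap]; simp only [← hx, hxT, if_neg, not_false_iff]
    have h2 : (sp n j (p.1.erase x, insert x p.2)).Nonempty := hgp ▸ h'
    rw [gmap_congr hgp h' h2]
    have hmax : (sp n j (p.1.erase x, insert x p.2)).max' h2 = x :=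
      max'_congr (hgp ▸ hs) h2 h
    rw [gmap]
    simp only [hmax]
    have hmem : x ∈ (p.1.erase x, insert x p.2).2 := mem_insert_self _ _
    simp only [if_pos hmem]
    ext1
    · exact Multiset.cons_erase hxm
    · exact erase_insert hxT

lemma gmap_ne {p : Multiset (Fin n) × Finset (Fin n)} (h : (sp n j p).Nonempty) :
    gmap n j p h ≠ p := by
  classical
  set x := (sp n j p).max' h with hx
  intro heq
  by_cases hxT : x ∈ p.2
  · have hgp : gmap n j p h = (x ::ₘ p.1, p.2.erase x) := by
      rw [gmap]; simp only [← hx, hxT, if_pos]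
    rw [hgp] at heq
    have h1 : x ::ₘ p.1 = p.1 := congrArg Prod.fst heq
    have h2 := congrArg Multiset.card h1
    rw [Multiset.card_cons] at h2
    omega
  · have hxm : x ∈ p.1 := max'_mem_fst h hxT
    have hgp : gmap n j p h = (p.1.erase x, insert x p.2) := by
      rw [gmap]; simp only [← hx, hxT, if_neg, not_false_iff]
    rw [hgp] at heq
    have h1 : p.1.erase x = p.1 := congrArg Prod.fst heq
    have h2 := congrArg Multiset.card h1
    rw [Multiset.card_erase_of_mem hxm, Nat.pred_eq_sub_one] at h2
    have hc : 1 ≤ Multiset.card p.1 := Multiset.card_pos.mpr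
      (fun h0 => by simp [h0] at hxm)
    omega

/-- The summand function. -/
noncomputable def Fterm (K : Type*) [CommRing K] (n : ℕ)
    (p : Multiset (Fin n) × Finset (Fin n)) : MvPolynomial (Fin n) K :=
  (-1) ^ (Multiset.card p.1) * (p.1.map X).prod * ∏ t ∈ p.2, X t

lemma Fterm_add_gmap (K : Type*) [CommRing K]
    {p : Multiset (Fin n) × Finset (Fin n)} (h : (sp n j p).Nonempty) :
    Fterm K n p + Fterm K n (gmap n j p h) = 0 := by
  classical
  set x := (sp n j p).max' h with hx
  by_cases hxT : x ∈ p.2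
  · have hgp : gmap n j p h = (x ::ₘ p.1, p.2.erase x) := by
      rw [gmap]; simp only [← hx, hxT, if_pos]
    rw [hgp]
    show (-1) ^ (Multiset.card p.1) * (p.1.map X).prod * ∏ t ∈ p.2, X t
      + (-1) ^ (Multiset.card (x ::ₘ p.1)) * ((x ::ₘ p.1).map X).prod
        * ∏ t ∈ p.2.erase x, X t = 0
    rw [← Finset.mul_prod_erase p.2 _ hxT, Multiset.card_cons, Multiset.map_cons,
      Multiset.prod_cons, pow_succ]
    ring
  · have hxm : x ∈ p.1 := max'_mem_fst h hxT
    have hgp : gmap n j p h = (p.1.erase x, insert x p.2) := by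
      rw [gmap]; simp only [← hx, hxT, if_neg, not_false_iff]
    rw [hgp]
    show (-1) ^ (Multiset.card p.1) * (p.1.map X).prod * ∏ t ∈ p.2, X t
      + (-1) ^ (Multiset.card (p.1.erase x)) * ((p.1.erase x).map X).prod
        * ∏ t ∈ insert x p.2, X t = 0
    obtain ⟨c, hc⟩ : ∃ c, Multiset.card p.1 = c + 1 :=
      ⟨Multiset.card p.1 - 1, by
        have : 1 ≤ Multiset.card p.1 := Multiset.card_pos.mpr
          (fun h0 => by simp [h0] at hxm)
        omega⟩
    rw [Finset.prod_insert hxT, Multiset.card_erase_of_mem hxm, hc,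
      ← Multiset.prod_map_erase (f := X) hxm, pow_succ]
    simp only [Nat.pred_succ]
    ring

end CHAux

/-- The complete homogeneous symmetric polynomial of degree `i` in the
variables `v_1, …, v_j` (i.e. the variables of index `< j` in `Fin n`). -/
noncomputable def completeHomogeneous (K : Type*) [CommRing K] (n j i : ℕ) :
    MvPolynomial (Fin n) K :=
  ∑ m ∈ (Finset.univ.filter fun k : Fin n => (k : ℕ) < j).sym i,
    (Multiset.map MvPolynomial.X (m : Sym (Fin n) i).val).prod

open CHAux

/-- Lemma 2.3: for every `1 ≤ j ≤ n`,
`∑_{i=0}^{n-j+1} (-1)^i H_i(v_1,…,v_j) e_{n-j+1-i}(v_1,…,v_n) = 0`. -/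
theorem sum_completeHomogeneous_mul_esymm (K : Type*) [Field K] (n j : ℕ)
    (hj1 : 1 ≤ j) (hjn : j ≤ n) :
    ∑ i ∈ Finset.range (n - j + 2),
      (-1 : MvPolynomial (Fin n) K) ^ i * completeHomogeneous K n j i *
        MvPolynomial.esymm (Fin n) K (n - j + 1 - i) = 0 := by
  classical
  set M := n - j + 1 with hM
  have hr2 : n - j + 2 = M + 1 := by omega
  rw [hr2]
  set Di : ℕ → Finset (Multiset (Fin n) × Finset (Fin n)) :=
    fun i => (((Sset n j).sym i).image (fun s : Sym (Fin n) i => (s : Multiset (Fin n)))) ×ˢ powersetCard (M - i) univ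
    with hDi
  set D : Finset (Multiset (Fin n) × Finset (Fin n)) :=
    (range (M + 1)).biUnion Di with hD
  have memDi : ∀ (i : ℕ) (p : Multiset (Fin n) × Finset (Fin n)), p ∈ Di i ↔
      (Multiset.card p.1 = i ∧ ∀ a ∈ p.1, a ∈ Sset n j) ∧ p.2.card = M - i := by
    intro i p
    rw [hDi]
    simp only [mem_product, mem_image, mem_powersetCard_univ]
    constructor
    · rintro ⟨⟨m, hm, hmv⟩, h2⟩
      refine ⟨⟨?_, ?_⟩, h2⟩
      · rw [← hmv]; exact m.2
      · intro a ha
        rw [← hmv] at ha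
        exact mem_sym_iff.mp hm a ((Sym.mem_coe).mpr ha)
    · rintro ⟨⟨h1, h2⟩, h3⟩
      refine ⟨⟨Sym.mk p.1 h1, ?_, rfl⟩, h3⟩
      rw [mem_sym_iff]
      intro a ha
      exact h2 a ((Sym.mem_mk a p.1 h1).mp ha)
  have memD : ∀ p : Multiset (Fin n) × Finset (Fin n),
      p ∈ D ↔ Good n j M p := by
    intro p
    rw [hD, mem_biUnion]
    constructor
    · rintro ⟨i, hi, hpi⟩
      rw [memDi] at hpi
      obtain ⟨⟨h1, h2⟩, h3⟩ := hpi
      rw [mem_range] at hi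
      exact ⟨by omega, h2⟩
    · rintro ⟨h1, h2⟩
      refine ⟨Multiset.card p.1, mem_range.mpr (by omega), ?_⟩
      rw [memDi]
      exact ⟨⟨rfl, h2⟩, by omega⟩
  have hdisj : (↑(range (M + 1)) : Set ℕ).PairwiseDisjoint Di := by
    intro i _ i' _ hne
    rw [Function.onFun, Finset.disjoint_left]
    intro p hp hp'
    rw [memDi] at hp hp'
    exact hne (hp.1.1 ▸ hp'.1.1)
  have key : ∑ i ∈ range (M + 1),
      (-1 : MvPolynomial (Fin n) K) ^ i * completeHomogeneous K n j i *
        esymm (Fin n) K (M - i) = ∑ p ∈ D, Fterm K n p := by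
    rw [hD, sum_biUnion hdisj]
    refine sum_congr rfl fun i _ => ?_
    rw [hDi]
    rw [Finset.sum_product]
    rw [Finset.sum_image (fun a _ b _ hab => Sym.coe_injective hab)]
    rw [completeHomogeneous, esymm, mul_assoc, Finset.sum_mul_sum, Finset.mul_sum]
    refine sum_congr rfl fun m hm => ?_
    rw [Finset.mul_sum]
    refine sum_congr rfl fun T hT => ?_
    show (-1 : MvPolynomial (Fin n) K) ^ i *
        ((Multiset.map X (m : Sym (Fin n) i).val).prod * ∏ t ∈ T, X t) =
      Fterm K n ((m : Sym (Fin n) i).val, T)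
    rw [Fterm]
    show _ = (-1 : MvPolynomial (Fin n) K) ^ (Multiset.card (m : Sym (Fin n) i).val) *
        (Multiset.map X (m : Sym (Fin n) i).val).prod * ∏ t ∈ T, X t
    rw [(m : Sym (Fin n) i).2, mul_assoc]
  rw [key]
  refine Finset.sum_involution
    (fun p hp => gmap n j p (sp_nonempty hj1 hjn ((memD p).mp hp)))
    (fun p hp => Fterm_add_gmap K _)
    (fun p hp _ => gmap_ne _)
    (fun p hp => (memD _).mpr (gmap_good ((memD p).mp hp) _))
    (fun p hp => gmap_gmap ((memD p).mp hp).2 _ _)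
end

section
/- The ideal (e_1,…,e_n) of K[v_1,…,v_n] generated by the elementary symmetric polynomials equals the ideal generated by the complete homogeneous symmetric polynomials H_1(v_1,…,v_n), H_2(v_1,…,v_{n-1}), …, H_{n-1}(v_1,v_2), H_n(v_1). -/
open MvPolynomial Finset

namespace CHAux

variable (K : Type*) [CommRing K] (n : ℕ)

/-- The set of variables of index `< j`. -/
def varSet (n j : ℕ) : Finset (Fin n) := Finset.univ.filter fun k : Fin n => (k : ℕ) < j

/-- Partial elementary symmetric polynomial in the variables of index `< j`. -/
noncomputable def pE (j k : ℕ) : MvPolynomial (Fin n) K :=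
  ∑ A ∈ (varSet n j).powersetCard k, ∏ a ∈ A, X a

lemma ch_eq (j i : ℕ) : completeHomogeneous K n j i =
    ∑ m ∈ (varSet n j).sym i, (Multiset.map X (m : Sym (Fin n) i).val).prod := rfl

lemma ch_zero (j : ℕ) : completeHomogeneous K n j 0 = 1 := by
  rw [ch_eq]
  rw [Finset.sym_zero, Finset.sum_singleton]
  rfl

lemma varSet_zero : varSet n 0 = ∅ := by
  simp [varSet]

lemma varSet_top : varSet n n = Finset.univ := by
  exact Finset.filter_true_of_mem fun x _ => x.isLt

lemma ch_zero_vars (i : ℕ) : completeHomogeneous K n 0 (i + 1) = 0 := by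
  rw [ch_eq, varSet_zero, Finset.sym_empty, Finset.sum_empty]

lemma pE_zero (j : ℕ) : pE K n j 0 = 1 := by
  simp [pE]

lemma pE_zero_vars (k : ℕ) : pE K n 0 (k + 1) = 0 := by
  rw [pE, varSet_zero, Finset.powersetCard_eq_empty.2 (by simp), Finset.sum_empty]

lemma pE_top (k : ℕ) : pE K n n k = esymm (Fin n) K k := by
  rw [pE, varSet_top, esymm]

lemma esymm_eq_zero_of_gt {k : ℕ} (h : n < k) : esymm (Fin n) K k = 0 := by
  rw [esymm, Finset.powersetCard_eq_empty.2 (by simpa using h), Finset.sum_empty]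

lemma varSet_succ {j : ℕ} (hj : j < n) :
    varSet n (j + 1) = insert ⟨j, hj⟩ (varSet n j) := by
  ext a
  simp only [varSet, Finset.mem_filter, Finset.mem_univ, true_and, Finset.mem_insert]
  constructor
  · intro h
    rcases Nat.lt_succ_iff_lt_or_eq.1 h with h | h
    · exact Or.inr h
    · exact Or.inl (Fin.ext h)
  · rintro (rfl | h)
    · exact Nat.lt_succ_self j
    · exact Nat.lt_succ_of_lt h

lemma not_mem_varSet {j : ℕ} (hj : j < n) : (⟨j, hj⟩ : Fin n) ∉ varSet n j := by
  simp [varSet]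

lemma pE_rec {j : ℕ} (hj : j < n) (k : ℕ) :
    pE K n (j + 1) (k + 1) = pE K n j (k + 1) + X ⟨j, hj⟩ * pE K n j k := by
  classical
  rw [pE, varSet_succ (n:=n) hj, Finset.powersetCard_succ_insert (not_mem_varSet (n:=n) hj)]
  rw [Finset.sum_union]
  · congr 1
    rw [Finset.sum_image ?_, pE, Finset.mul_sum]
    · apply Finset.sum_congr rfl
      intro A hA
      rw [Finset.mem_powersetCard] at hA
      have hx : (⟨j, hj⟩ : Fin n) ∉ A := fun hm => not_mem_varSet (n:=n) hj (hA.1 hm)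
      rw [Finset.prod_insert hx]
    · intro A hA B hB hAB
      rw [Finset.mem_coe, Finset.mem_powersetCard] at hA hB
      have hxA : (⟨j, hj⟩ : Fin n) ∉ A := fun hm => not_mem_varSet (n:=n) hj (hA.1 hm)
      have hxB : (⟨j, hj⟩ : Fin n) ∉ B := fun hm => not_mem_varSet (n:=n) hj (hB.1 hm)
      have := congrArg (Finset.erase · (⟨j, hj⟩ : Fin n)) hAB
      simpa [Finset.erase_insert, hxA, hxB] using this
  · rw [Finset.disjoint_left]
    intro A hA hA'
    rw [Finset.mem_powersetCard] at hA
    rw [Finset.mem_image] at hA'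
    obtain ⟨B, _, rfl⟩ := hA'
    exact not_mem_varSet (n:=n) hj (hA.1 (Finset.mem_insert_self _ _))


lemma ch_rec {j : ℕ} (hj : j < n) (i : ℕ) :
    completeHomogeneous K n (j + 1) (i + 1) =
      completeHomogeneous K n j (i + 1) +
        X ⟨j, hj⟩ * completeHomogeneous K n (j + 1) i := by
  classical
  set a : Fin n := ⟨j, hj⟩ with ha
  have ha_mem : a ∈ varSet n (j + 1) := by
    simp [varSet, ha]
  have e1 : ((varSet n (j + 1)).sym (i + 1)).filter (fun m => a ∉ m) =
      (varSet n j).sym (i + 1) := by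
    ext m
    simp only [Finset.mem_filter, Finset.mem_sym_iff, varSet, Finset.mem_univ, true_and]
    constructor
    · rintro ⟨h1, h2⟩ b hb
      have hb' := h1 b hb
      rcases Nat.lt_succ_iff_lt_or_eq.1 hb' with h | h
      · exact h
      · exact (h2 ((Fin.ext h : b = a) ▸ hb)).elim
    · intro h
      refine ⟨fun b hb => ?_, fun hmem => ?_⟩
      · have := h b hb
        exact Nat.lt_succ_of_lt this
      · have := h a hmem
        simp only [Finset.mem_filter, Finset.mem_univ, true_and, ha] at this
        exact absurd this (lt_irrefl j)
  have e2 : ((varSet n (j + 1)).sym (i + 1)).filter (fun m => a ∈ m) =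
      ((varSet n (j + 1)).sym i).image (Sym.cons a) := by
    ext m
    simp only [Finset.mem_filter, Finset.mem_image, Finset.mem_sym_iff]
    constructor
    · rintro ⟨h1, h2⟩
      refine ⟨m.erase a h2, fun b hb => h1 b ?_, Sym.cons_erase h2⟩
      have : b ∈ (m.erase a h2 : Multiset (Fin n)) := hb
      rw [Sym.coe_erase] at this
      exact Multiset.mem_of_mem_erase this
    · rintro ⟨m', hm', rfl⟩
      refine ⟨fun b hb => ?_, Sym.mem_cons_self a m'⟩
      rcases Sym.mem_cons.1 hb with rfl | hb
      · exact ha_mem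
      · exact hm' b hb
  rw [ch_eq, ← Finset.sum_filter_add_sum_filter_not ((varSet n (j + 1)).sym (i + 1))
    (fun m => a ∈ m), e1, e2, Finset.sum_image
      (fun x _ y _ h => (Sym.cons_inj_right a x y).1 h)]
  rw [ch_eq, ch_eq, add_comm, Finset.mul_sum]
  congr 1
  apply Finset.sum_congr rfl
  intro m _
  show (Multiset.map X (a ::ₘ m.val)).prod = X a * (Multiset.map X m.val).prod
  rw [Multiset.map_cons, Multiset.prod_cons]

lemma newton (j m : ℕ) :
    ∑ k ∈ Finset.range (m + 2), (-1 : MvPolynomial (Fin n) K) ^ k * pE K n j k *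
      completeHomogeneous K n j (m + 1 - k) = 0 := by
  induction j generalizing m with
  | zero =>
    apply Finset.sum_eq_zero
    intro k hk
    cases k with
    | zero => simp [pE_zero, ch_zero_vars]
    | succ k => simp [pE_zero_vars]
  | succ j ih =>
    by_cases hj : j < n
    · set x : MvPolynomial (Fin n) K := X (⟨j, hj⟩ : Fin n) with hxdef
      have hU : ∀ m : ℕ, ∑ k ∈ Finset.range (m + 2),
          (-1 : MvPolynomial (Fin n) K) ^ k * pE K n j k *
            completeHomogeneous K n (j + 1) (m + 1 - k)
          = x * ∑ k ∈ Finset.range (m + 1),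
            (-1) ^ k * pE K n j k * completeHomogeneous K n (j + 1) (m - k) := by
        intro m
        rw [Finset.sum_range_succ]
        have step : ∀ k ∈ Finset.range (m + 1),
            (-1 : MvPolynomial (Fin n) K) ^ k * pE K n j k *
              completeHomogeneous K n (j + 1) (m + 1 - k)
            = (-1) ^ k * pE K n j k * completeHomogeneous K n j (m + 1 - k)
              + x * ((-1) ^ k * pE K n j k * completeHomogeneous K n (j + 1) (m - k)) := by
          intro k hk
          rw [Finset.mem_range] at hk
          have h1 : m + 1 - k = (m - k) + 1 := by omega
          rw [h1, ch_rec K n hj]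
          ring
        rw [Finset.sum_congr rfl step, Finset.sum_add_distrib, ← Finset.mul_sum]
        have h2 : completeHomogeneous K n (j + 1) (m + 1 - (m + 1)) =
            completeHomogeneous K n j (m + 1 - (m + 1)) := by
          simp [ch_zero]
        rw [h2, add_right_comm,
          ← Finset.sum_range_succ (fun k => (-1 : MvPolynomial (Fin n) K) ^ k * pE K n j k *
            completeHomogeneous K n j (m + 1 - k)) (m + 1),
          ih m, zero_add]
      rw [Finset.sum_range_succ']
      have step2 : ∀ k ∈ Finset.range (m + 1),
          (-1 : MvPolynomial (Fin n) K) ^ (k + 1) * pE K n (j + 1) (k + 1) *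
            completeHomogeneous K n (j + 1) (m + 1 - (k + 1))
          = (fun k => (-1 : MvPolynomial (Fin n) K) ^ k * pE K n j k *
              completeHomogeneous K n (j + 1) (m + 1 - k)) (k + 1)
            - x * ((-1) ^ k * pE K n j k * completeHomogeneous K n (j + 1) (m - k)) := by
        intro k hk
        simp only []
        have h1 : m + 1 - (k + 1) = m - k := by omega
        rw [h1, pE_rec K n hj]
        ring
      rw [Finset.sum_congr rfl step2, Finset.sum_sub_distrib, ← Finset.mul_sum]
      have h3 : (-1 : MvPolynomial (Fin n) K) ^ 0 * pE K n (j + 1) 0 *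
          completeHomogeneous K n (j + 1) (m + 1 - 0)
          = (fun k => (-1 : MvPolynomial (Fin n) K) ^ k * pE K n j k *
              completeHomogeneous K n (j + 1) (m + 1 - k)) 0 := by
        simp only []
        rw [pE_zero, pE_zero]
      rw [h3, sub_add_eq_add_sub,
        ← Finset.sum_range_succ' (fun k => (-1 : MvPolynomial (Fin n) K) ^ k * pE K n j k *
          completeHomogeneous K n (j + 1) (m + 1 - k)) (m + 1),
        hU m, sub_self]
    · have hv : varSet n (j + 1) = varSet n j := by
        ext a
        simp only [varSet, Finset.mem_filter, Finset.mem_univ, true_and]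
        constructor
        · intro _
          exact lt_of_lt_of_le a.isLt (le_of_not_gt hj)
        · exact Nat.lt_succ_of_lt
      simp only [pE, ch_eq, hv]
      simpa only [pE, ch_eq] using ih m

lemma ch_top_mem_Ie : ∀ i : ℕ, 1 ≤ i →
    completeHomogeneous K n n i ∈
      Ideal.span (Set.range fun r : Fin n => esymm (Fin n) K ((r : ℕ) + 1)) := by
  intro i
  induction i using Nat.strong_induction_on with
  | _ i IH =>
    intro hi
    obtain ⟨m, rfl⟩ : ∃ m, i = m + 1 := ⟨i - 1, by omega⟩
    have h := newton K n n m
    rw [Finset.sum_range_succ'] at h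
    have h0 : (-1 : MvPolynomial (Fin n) K) ^ 0 * pE K n n 0 *
        completeHomogeneous K n n (m + 1 - 0) = completeHomogeneous K n n (m + 1) := by
      rw [pE_zero, pow_zero, one_mul, one_mul, Nat.sub_zero]
    rw [h0] at h
    rw [eq_neg_of_add_eq_zero_right h]
    apply neg_mem
    apply Ideal.sum_mem
    intro k hk
    rw [pE_top]
    by_cases hkn : k + 1 ≤ n
    · refine Ideal.mul_mem_right _ _ (Ideal.mul_mem_left _ _ (Ideal.subset_span ?_))
      exact ⟨⟨k, by omega⟩, rfl⟩
    · rw [esymm_eq_zero_of_gt K n (by omega)]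
      simp
lemma ch_mem_Ie : ∀ d i : ℕ, d ≤ n → d < i →
    completeHomogeneous K n (n - d) i ∈
      Ideal.span (Set.range fun r : Fin n => esymm (Fin n) K ((r : ℕ) + 1)) := by
  intro d
  induction d with
  | zero =>
    intro i _ hi
    simpa using ch_top_mem_Ie K n i hi
  | succ d IHd =>
    intro i hd hi
    obtain ⟨m, rfl⟩ : ∃ m, i = m + 1 := ⟨i - 1, by omega⟩
    have hj : n - (d + 1) < n := by omega
    have hrec := ch_rec K n hj m
    have hidx : n - (d + 1) + 1 = n - d := by omega
    rw [hidx] at hrec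
    have heq : completeHomogeneous K n (n - (d + 1)) (m + 1) =
        completeHomogeneous K n (n - d) (m + 1) -
          X ⟨n - (d + 1), hj⟩ * completeHomogeneous K n (n - d) m := by
      rw [hrec]; ring
    rw [heq]
    exact sub_mem (IHd (m + 1) (by omega) (by omega))
      (Ideal.mul_mem_left _ _ (IHd m (by omega) (by omega)))

lemma ch_mem_IH : ∀ i : ℕ, 1 ≤ i → i ≤ n → ∀ j : ℕ, n - i + 1 ≤ j → j ≤ n →
    completeHomogeneous K n j i ∈ Ideal.span (Set.range fun r : Fin n =>
      completeHomogeneous K n (n - (r : ℕ)) ((r : ℕ) + 1)) := by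
  intro i
  induction i using Nat.strong_induction_on with
  | _ i IHi =>
    intro hi1 hin j hj1 hj2
    obtain ⟨m, rfl⟩ : ∃ m, i = m + 1 := ⟨i - 1, by omega⟩
    revert hj2
    induction j, hj1 using Nat.le_induction with
    | base =>
      intro _
      apply Ideal.subset_span
      refine ⟨⟨m, by omega⟩, ?_⟩
      show completeHomogeneous K n (n - m) (m + 1) = completeHomogeneous K n (n - (m + 1) + 1) (m + 1)
      congr 2
      omega
    | succ j hj IHj =>
      intro hj2
      have hjlt : j < n := by omega
      rw [ch_rec K n hjlt m]
      refine add_mem (IHj (by omega)) (Ideal.mul_mem_left _ _ ?_)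
      have hm : 1 ≤ m := by omega
      exact IHi m (by omega) hm (by omega) (j + 1) (by omega) (by omega)

lemma esymm_mem_IH : ∀ i : ℕ, 1 ≤ i → i ≤ n →
    esymm (Fin n) K i ∈ Ideal.span (Set.range fun r : Fin n =>
      completeHomogeneous K n (n - (r : ℕ)) ((r : ℕ) + 1)) := by
  intro i hi1 hin
  obtain ⟨m, rfl⟩ : ∃ m, i = m + 1 := ⟨i - 1, by omega⟩
  have h := newton K n n m
  rw [Finset.sum_range_succ] at h
  have h0 : (-1 : MvPolynomial (Fin n) K) ^ (m + 1) * pE K n n (m + 1) *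
      completeHomogeneous K n n (m + 1 - (m + 1)) =
      (-1) ^ (m + 1) * esymm (Fin n) K (m + 1) := by
    rw [pE_top, Nat.sub_self, ch_zero, mul_one]
  rw [h0] at h
  rw [← Ideal.unit_mul_mem_iff_mem _ (((isUnit_one (M := MvPolynomial (Fin n) K)).neg).pow (m + 1))]
  rw [eq_neg_of_add_eq_zero_right h]
  apply neg_mem
  apply Ideal.sum_mem
  intro k hk
  rw [Finset.mem_range] at hk
  refine Ideal.mul_mem_left _ _ ?_
  exact ch_mem_IH K n (m + 1 - k) (by omega) (by omega) n (by omega) le_rfl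

end CHAux

/-- The ideal `(e_1, …, e_n)` equals the ideal generated by the complete
homogeneous symmetric polynomials `H_i(v_1, …, v_{n-i+1})` for `i = 1, …, n`. -/
theorem ideal_esymm_eq_ideal_completeHomogeneous (K : Type*) [Field K] (n : ℕ) :
    Ideal.span (Set.range fun i : Fin n => MvPolynomial.esymm (Fin n) K ((i : ℕ) + 1)) =
      Ideal.span (Set.range fun i : Fin n =>
        completeHomogeneous K n (n - (i : ℕ)) ((i : ℕ) + 1)) := by
  apply le_antisymm
  · rw [Ideal.span_le]
    rintro _ ⟨r, rfl⟩
    exact CHAux.esymm_mem_IH K n ((r : ℕ) + 1) (by omega) r.isLt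
  · rw [Ideal.span_le]
    rintro _ ⟨r, rfl⟩
    exact CHAux.ch_mem_Ie K n (r : ℕ) ((r : ℕ) + 1) (le_of_lt r.isLt) (Nat.lt_succ_self _)
end

section
/- The quotient ring K[v_1,…,v_n]/(e_1,…,e_n) (the coinvariant algebra of the symmetric group) has dimension n! as a K-vector space. -/
open MvPolynomial

namespace CoinvariantProof

theorem multiset_esymm_cons {S : Type*} [CommSemiring S] (a : S) (s : Multiset S) (k : ℕ) :
    (a ::ₘ s).esymm (k + 1) = s.esymm (k + 1) + a * s.esymm k := by
  simp only [Multiset.esymm, Multiset.powersetCard_cons, Multiset.map_add, Multiset.sum_add,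
    Multiset.map_map, Function.comp_def, Multiset.prod_cons]
  rw [Multiset.sum_map_mul_left]

theorem multiset_esymm_zero {S : Type*} [CommSemiring S] (s : Multiset S) :
    s.esymm 0 = 1 := by
  simp [Multiset.esymm]

theorem multiset_esymm_eq_zero {S : Type*} [CommSemiring S] (s : Multiset S) (k : ℕ)
    (h : Multiset.card s < k) : s.esymm k = 0 := by
  simp [Multiset.esymm, Multiset.powersetCard_eq_empty _ h]

theorem multiset_esymm_map {S T : Type*} [CommSemiring S] [CommSemiring T] (φ : S →+* T)
    (s : Multiset S) (k : ℕ) : (s.map φ).esymm k = φ (s.esymm k) := by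
  simp only [Multiset.esymm, Multiset.powersetCard_map, Multiset.map_map, Function.comp_def]
  rw [map_multiset_sum, Multiset.map_map]
  congr 1
  refine Multiset.map_congr rfl fun t _ => ?_
  simp [map_multiset_prod]

theorem univ_val_map_cons {m : ℕ} {S : Type*} (h : Fin (m + 1) → S) :
    ((Finset.univ.val.map h : Multiset S))
      = h 0 ::ₘ Finset.univ.val.map fun j : Fin m => h j.succ := by
  rw [Fin.univ_succAbove m 0, Finset.cons_val, Multiset.map_cons, Finset.map_val,
    Multiset.map_map]
  rfl

theorem hneg {T : Type*} [Monoid T] [HasDistribNeg T] (k : ℕ) :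
    ((-1 : T) ^ k) * (-1) ^ k = 1 := by
  rw [← pow_add]; exact Even.neg_one_pow ⟨k, rfl⟩


theorem basis_of_subsingleton {R M : Type*} (ι : Type*) [Semiring R] [AddCommMonoid M]
    [Module R M] [Subsingleton R] : Nonempty (Module.Basis ι R M) := by
  haveI : Subsingleton M := Module.subsingleton R M
  haveI : Subsingleton (ι →₀ R) := ⟨fun f g => Finsupp.ext fun i => Subsingleton.elim _ _⟩
  exact ⟨Module.Basis.ofRepr
    { toFun := fun _ => 0, invFun := fun _ => 0,
      map_add' := fun _ _ => Subsingleton.elim _ _,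
      map_smul' := fun _ _ => Subsingleton.elim _ _,
      left_inv := fun _ => Subsingleton.elim _ _,
      right_inv := fun _ => Subsingleton.elim _ _ }⟩

universe u

set_option maxHeartbeats 2000000 in
theorem aux : ∀ (m : ℕ) (R : Type u) [CommRing R] (c : Fin m → R),
    Nonempty (Module.Basis (Fin (Nat.factorial m)) R
      (MvPolynomial (Fin m) R ⧸
        Ideal.span (Set.range fun i : Fin m => esymm (Fin m) R ((i : ℕ) + 1) - C (c i)))) := by
  intro m
  induction m with
  | zero =>
    intro R _ c
    have hI : Ideal.span (Set.range fun i : Fin 0 => esymm (Fin 0) R ((i : ℕ) + 1) - C (c i))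
        = ⊥ := by
      rw [Set.range_eq_empty, Ideal.span_empty]
    set I := Ideal.span (Set.range fun i : Fin 0 => esymm (Fin 0) R ((i : ℕ) + 1) - C (c i))
    let φ : R →ₐ[R] (MvPolynomial (Fin 0) R ⧸ I) :=
      (Ideal.Quotient.mkₐ R I).comp (isEmptyAlgEquiv R (Fin 0)).symm.toAlgHom
    have hbij : Function.Bijective φ := by
      constructor
      · intro x y hxy
        have h2 : ((isEmptyAlgEquiv R (Fin 0)).symm x : MvPolynomial (Fin 0) R)
            - (isEmptyAlgEquiv R (Fin 0)).symm y ∈ I := Ideal.Quotient.eq.mp hxy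
        rw [hI, Ideal.mem_bot, sub_eq_zero] at h2
        exact (isEmptyAlgEquiv R (Fin 0)).symm.injective h2
      · exact Ideal.Quotient.mk_surjective.comp (isEmptyAlgEquiv R (Fin 0)).symm.surjective
    exact ⟨((Module.Basis.singleton (Fin 1) R).map
      (LinearEquiv.ofBijective φ.toLinearMap hbij)).reindex (finCongr rfl)⟩
  | succ m IH =>
    intro R _ c
    rcases subsingleton_or_nontrivial R with hS | hS
    · exact basis_of_subsingleton _
    classical
    classical
    set c' : ℕ → R := fun k => if h : k < m + 1 then c ⟨k, h⟩ else 0 with hc'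
    set q : ℕ → Polynomial R := fun k =>
      Nat.rec 1 (fun k qk => Polynomial.X * qk + Polynomial.C ((-1) ^ (k+1) * c' k)) k with hqdef
    have hq0 : q 0 = 1 := rfl
    have hqs : ∀ k, q (k+1) = Polynomial.X * q k + Polynomial.C ((-1) ^ (k+1) * c' k) :=
      fun k => rfl
    have hqm : ∀ k, (q k).Monic ∧ (q k).natDegree = k := by
      intro k
      induction k with
      | zero => exact ⟨Polynomial.monic_one, Polynomial.natDegree_one⟩
      | succ k ih =>
        have h1 : (Polynomial.X * q k).Monic := Polynomial.monic_X.mul ih.1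
        have h2 : (Polynomial.X * q k).natDegree = k + 1 := by
          rw [Polynomial.natDegree_X_mul ih.1.ne_zero, ih.2]
        have hlt : (Polynomial.C ((-1:R) ^ (k+1) * c' k)).degree < (Polynomial.X * q k).degree := by
          refine lt_of_le_of_lt Polynomial.degree_C_le ?_
          rw [Polynomial.degree_eq_natDegree h1.ne_zero, h2]
          exact_mod_cast Nat.succ_pos k
        rw [hqs k]
        exact ⟨h1.add_of_left hlt,
          by rw [Polynomial.natDegree_add_eq_left_of_degree_lt hlt, h2]⟩
    have hneg : ∀ {T : Type u} [CommRing T] (k : ℕ), ((-1 : T) ^ k) * (-1) ^ k = 1 := by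
      intro T _ k
      rw [← pow_add]; exact Even.neg_one_pow ⟨k, rfl⟩
    set f : Polynomial R := q (m+1) with hfdef
    have hf : f.Monic := (hqm (m+1)).1
    have hfdeg : f.natDegree = m + 1 := (hqm (m+1)).2
    set B := AdjoinRoot f with hB
    set θ : Polynomial R →+* B := AdjoinRoot.mk f with hθ
    set ρ : B := AdjoinRoot.root f with hρ
    set d : ℕ → B := fun k => (-1) ^ k * θ (q k) with hd
    have hd0 : d 0 = 1 := by simp [hd, hq0]
    have hds : ∀ k, d (k + 1) = algebraMap R B (c' k) - ρ * d k := by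
      intro k
      have h1 : θ (q (k+1)) = ρ * θ (q k)
          + (-1 : B) ^ (k+1) * algebraMap R B (c' k) := by
        rw [hqs k, map_add, map_mul, AdjoinRoot.mk_X, AdjoinRoot.mk_C,
          ← AdjoinRoot.algebraMap_eq, map_mul, map_pow, map_neg, map_one]
      show (-1) ^ (k+1) * θ (q (k+1)) = _
      rw [h1]
      have h2 := hneg (T := B) k
      simp only [pow_succ]
      linear_combination (algebraMap R B (c' k)) * h2
    have hdroot : ρ * d m = algebraMap R B (c' m) := by
      have h0 : θ (q (m+1)) = 0 := AdjoinRoot.mk_self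
      have h1 : ρ * θ (q m) + (-1 : B) ^ (m+1) * algebraMap R B (c' m) = 0 := by
        rw [hqs m, map_add, map_mul, AdjoinRoot.mk_X, AdjoinRoot.mk_C,
          ← AdjoinRoot.algebraMap_eq, map_mul, map_pow, map_neg, map_one] at h0
        exact h0
      show ρ * ((-1) ^ m * θ (q m)) = _
      simp only [pow_succ] at h1
      linear_combination ((-1 : B)) ^ m * h1 + (algebraMap R B (c' m)) * hneg (T := B) m
    obtain ⟨bq⟩ := IH B (fun i : Fin m => d ((i : ℕ) + 1))
    set J : Ideal (MvPolynomial (Fin m) B) :=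
      Ideal.span (Set.range fun i : Fin m =>
        esymm (Fin m) B ((i : ℕ) + 1) - C (d ((i : ℕ) + 1))) with hJ
    set I : Ideal (MvPolynomial (Fin (m+1)) R) :=
      Ideal.span (Set.range fun i : Fin (m+1) =>
        esymm (Fin (m+1)) R ((i : ℕ) + 1) - C (c i)) with hI
    set w : Fin m → (MvPolynomial (Fin (m+1)) R ⧸ I) :=
      fun j => Ideal.Quotient.mk I (X j.succ) with hw
    set x0 : MvPolynomial (Fin (m+1)) R ⧸ I := Ideal.Quotient.mk I (X 0) with hx0
    set ε : ℕ → (MvPolynomial (Fin (m+1)) R ⧸ I) :=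
      fun k => (Finset.univ.val.map w).esymm k with hε
    have hε0 : ε 0 = 1 := multiset_esymm_zero _
    have hεtop : ε (m+1) = 0 := by
      refine multiset_esymm_eq_zero _ _ ?_
      simp
    have key : ∀ k, Ideal.Quotient.mk I (esymm (Fin (m+1)) R (k+1)) = ε (k+1) + x0 * ε k := by
      intro k
      have h1 : Ideal.Quotient.mk I (esymm (Fin (m+1)) R (k+1)) =
          aeval (fun i : Fin (m+1) => Ideal.Quotient.mk I (X i)) (esymm (Fin (m+1)) R (k+1)) :=
        DFunLike.congr_fun (MvPolynomial.aeval_unique (Ideal.Quotient.mkₐ R I)) _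
      rw [h1, aeval_esymm_eq_multiset_esymm,
        univ_val_map_cons (fun i : Fin (m+1) => Ideal.Quotient.mk I (X i)),
        multiset_esymm_cons]
    have hgen : ∀ (j : ℕ) (hj : j < m + 1),
        ε (j+1) + x0 * ε j = algebraMap R (MvPolynomial (Fin (m+1)) R ⧸ I) (c ⟨j, hj⟩) := by
      intro j hj
      have hmem : esymm (Fin (m+1)) R (j+1) - C (c ⟨j, hj⟩) ∈ I :=
        Ideal.subset_span ⟨⟨j, hj⟩, rfl⟩
      have h2 := Ideal.Quotient.eq_zero_iff_mem.mpr hmem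
      rw [map_sub, sub_eq_zero] at h2
      rw [← key j, h2, IsScalarTower.algebraMap_apply R (MvPolynomial (Fin (m+1)) R), algebraMap_eq,
        Ideal.Quotient.algebraMap_eq]
    have hq_eval : ∀ k, k ≤ m → Polynomial.aeval x0 (q k) = (-1) ^ k * ε k := by
      intro k
      induction k with
      | zero => simp [hq0, hε0]
      | succ k ih =>
        intro hk
        have hk' : k ≤ m := Nat.le_of_succ_le hk
        have hc'k : c' k = c ⟨k, by omega⟩ := dif_pos _
        have hg := hgen k (by omega)
        rw [hqs k, map_add, map_mul, Polynomial.aeval_X, Polynomial.aeval_C, ih hk']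
        rw [show ((algebraMap R (MvPolynomial (Fin (m+1)) R ⧸ I)) ((-1) ^ (k+1) * c' k))
            = (-1) ^ (k+1) * algebraMap R _ (c' k) from by
          rw [map_mul, map_pow, map_neg, map_one], hc'k]
        simp only [pow_succ]
        linear_combination ((-1 : MvPolynomial (Fin (m+1)) R ⧸ I) ^ k) * hg
    have hf0 : Polynomial.aeval x0 f = 0 := by
      have h1 : Polynomial.aeval x0 (q (m+1)) = x0 * ((-1) ^ m * ε m)
          + (-1 : MvPolynomial (Fin (m+1)) R ⧸ I) ^ (m+1)
            * algebraMap R _ (c' m) := by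
        rw [hqs m, map_add, map_mul, Polynomial.aeval_X, Polynomial.aeval_C, hq_eval m le_rfl,
          map_mul, map_pow, map_neg, map_one]
      have hc'm : c' m = c ⟨m, by omega⟩ := dif_pos _
      have h2 := hgen m (by omega)
      rw [hεtop, zero_add] at h2
      show Polynomial.aeval x0 (q (m+1)) = 0
      rw [h1, hc'm]
      simp only [pow_succ]
      linear_combination ((-1 : MvPolynomial (Fin (m+1)) R ⧸ I) ^ m) * h2
    set β : B →ₐ[R] (MvPolynomial (Fin (m+1)) R ⧸ I) := AdjoinRoot.liftAlgHom f (Algebra.ofId R _) x0 hf0 with hβ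
    have hβρ : β ρ = x0 := AdjoinRoot.liftAlgHom_root _ _ _ _
    have hβd : ∀ k, k ≤ m → β (d k) = ε k := by
      intro k hk
      show β ((-1) ^ k * θ (q k)) = ε k
      rw [map_mul, map_pow, map_neg, map_one]
      rw [show β (θ (q k)) = Polynomial.aeval x0 (q k) from AdjoinRoot.liftAlgHom_mk _ _ _ _ _,
        hq_eval k hk, ← mul_assoc, hneg, one_mul]
    -- forward data
    set g : Fin (m+1) → (MvPolynomial (Fin m) B ⧸ J) :=
      Fin.cons (algebraMap B _ ρ) (fun j => Ideal.Quotient.mk J (X j)) with hg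
    set ε' : ℕ → (MvPolynomial (Fin m) B ⧸ J) :=
      fun k => (Finset.univ.val.map (fun j : Fin m => Ideal.Quotient.mk J (X j))).esymm k with hε'
    have hε'C : ∀ k, ε' k = Ideal.Quotient.mk J (esymm (Fin m) B k) := by
      intro k
      have h1 : (Finset.univ.val.map (fun j : Fin m => Ideal.Quotient.mk J (X j)))
          = (Finset.univ.val.map (X : Fin m → MvPolynomial (Fin m) B)).map
              (Ideal.Quotient.mk J) := by
        rw [Multiset.map_map]; rfl
      show (Finset.univ.val.map (fun j : Fin m => Ideal.Quotient.mk J (X j))).esymm k = _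
      rw [h1, multiset_esymm_map, ← congrFun (esymm_eq_multiset_esymm (Fin m) B) k]
    have halgQ : ∀ b : B, algebraMap B (MvPolynomial (Fin m) B ⧸ J) b
        = Ideal.Quotient.mk J (C b) := by
      intro b
      rw [IsScalarTower.algebraMap_apply B (MvPolynomial (Fin m) B), algebraMap_eq,
        Ideal.Quotient.algebraMap_eq]
    have hε'd : ∀ k, k ≤ m → ε' k = algebraMap B (MvPolynomial (Fin m) B ⧸ J) (d k) := by
      intro k hk
      match k with
      | 0 =>
        rw [hε'C, esymm_zero, hd0, map_one, map_one]
      | (j+1) =>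
        have hmem : esymm (Fin m) B (j+1) - C (d (j+1)) ∈ J := by
          refine Ideal.subset_span ⟨⟨j, by omega⟩, rfl⟩
        have h2 := Ideal.Quotient.eq_zero_iff_mem.mpr hmem
        rw [map_sub, sub_eq_zero] at h2
        rw [hε'C, h2, halgQ]
    have hε'top : ε' (m+1) = 0 := by
      refine multiset_esymm_eq_zero _ _ ?_
      simp
    have hkerΦ : ∀ a ∈ I,
        (aeval g : MvPolynomial (Fin (m+1)) R →ₐ[R] (MvPolynomial (Fin m) B ⧸ J)) a = 0 := by
      have hle : I ≤ RingHom.ker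
          ((aeval g : MvPolynomial (Fin (m+1)) R →ₐ[R] (MvPolynomial (Fin m) B ⧸ J)) :
            MvPolynomial (Fin (m+1)) R →+* (MvPolynomial (Fin m) B ⧸ J)) := by
        rw [hI, Ideal.span_le]
        rintro _ ⟨i, rfl⟩
        have hcomp : (aeval g) (esymm (Fin (m+1)) R ((i : ℕ) + 1) - C (c i)) = 0 := by
          rw [map_sub, aeval_C, aeval_esymm_eq_multiset_esymm, univ_val_map_cons g]
          have hg0 : g 0 = algebraMap B _ ρ := by rw [hg]; exact Fin.cons_zero _ _
          have hgs : (fun j : Fin m => g j.succ) = fun j => Ideal.Quotient.mk J (X j) := by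
            funext j; rw [hg]; exact Fin.cons_succ _ _ j
          rw [hg0, hgs, multiset_esymm_cons]
          refine Fin.lastCases ?_ ?_ i
          · have hlast : ((Fin.last m : Fin (m+1)) : ℕ) = m := Fin.val_last m
            rw [hlast]
            have he1 : (Finset.univ.val.map fun j : Fin m => Ideal.Quotient.mk J (X j)).esymm (m+1)
                = 0 := hε'top
            have he2 : (Finset.univ.val.map fun j : Fin m => Ideal.Quotient.mk J (X j)).esymm m
                = algebraMap B (MvPolynomial (Fin m) B ⧸ J) (d m) := hε'd m le_rfl
            rw [he1, he2, zero_add, ← map_mul, hdroot,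
              ← IsScalarTower.algebraMap_apply R B (MvPolynomial (Fin m) B ⧸ J)]
            have : c' m = c (Fin.last m) := dif_pos _
            rw [this, sub_self]
          · intro j
            have hcast : ((j.castSucc : Fin (m+1)) : ℕ) = (j : ℕ) := rfl
            rw [hcast]
            have he1 : (Finset.univ.val.map fun j : Fin m => Ideal.Quotient.mk J (X j)).esymm
                ((j : ℕ) + 1) = algebraMap B (MvPolynomial (Fin m) B ⧸ J) (d ((j : ℕ) + 1)) :=
              hε'd _ (by omega)
            have he2 : (Finset.univ.val.map fun j : Fin m => Ideal.Quotient.mk J (X j)).esymm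
                (j : ℕ) = algebraMap B (MvPolynomial (Fin m) B ⧸ J) (d (j : ℕ)) :=
              hε'd _ (by omega)
            rw [he1, he2, ← map_mul, ← map_add, hds (j : ℕ)]
            have h3 : (algebraMap R B) (c' (j : ℕ)) - ρ * d (j : ℕ) + ρ * d (j : ℕ)
                = (algebraMap R B) (c' (j : ℕ)) := by ring
            rw [h3, ← IsScalarTower.algebraMap_apply R B (MvPolynomial (Fin m) B ⧸ J)]
            have : c' (j : ℕ) = c j.castSucc := dif_pos _
            rw [this, sub_self]
        simpa [RingHom.mem_ker] using hcomp
      intro a ha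
      exact RingHom.mem_ker.mp (hle ha)
    set Φ : (MvPolynomial (Fin (m+1)) R ⧸ I) →ₐ[R] (MvPolynomial (Fin m) B ⧸ J) :=
      Ideal.Quotient.liftₐ I (aeval g) hkerΦ with hΦ
    -- backward map
    set ψ : MvPolynomial (Fin m) B →ₐ[R] (MvPolynomial (Fin (m+1)) R ⧸ I) :=
      aevalTower β w with hψ
    have hcompmap : ∀ p : MvPolynomial (Fin m) R,
        ψ (MvPolynomial.map (algebraMap R B) p) = aeval w p := by
      have h := MvPolynomial.algHom_ext
        (f := ψ.comp (MvPolynomial.mapAlgHom (σ := Fin m) (Algebra.ofId R B)))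
        (g := aeval w) ?_
      · intro p
        calc ψ (MvPolynomial.map (algebraMap R B) p)
            = (ψ.comp (MvPolynomial.mapAlgHom (σ := Fin m) (Algebra.ofId R B))) p := rfl
          _ = aeval w p := by rw [h]
      · intro i
        show ψ (MvPolynomial.map (algebraMap R B) (X i)) = aeval w (X i)
        rw [MvPolynomial.map_X, aeval_X, hψ]
        exact aevalTower_X _ _ _
    have hkerΨ : ∀ a ∈ J, ψ a = 0 := by
      have hle : J ≤ RingHom.ker (ψ : MvPolynomial (Fin m) B →+* (MvPolynomial (Fin (m+1)) R ⧸ I)) := by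
        rw [hJ, Ideal.span_le]
        rintro _ ⟨i, rfl⟩
        have hcomp : ψ (esymm (Fin m) B ((i : ℕ) + 1) - C (d ((i : ℕ) + 1))) = 0 := by
          rw [map_sub, show (esymm (Fin m) B ((i : ℕ) + 1))
              = MvPolynomial.map (algebraMap R B) (esymm (Fin m) R ((i : ℕ) + 1)) from
              (MvPolynomial.map_esymm (σ := Fin m) (R := R) ((i : ℕ) + 1)
                (algebraMap R B)).symm, hcompmap, aeval_esymm_eq_multiset_esymm]
          have h1 : ψ (C (d ((i : ℕ) + 1))) = β (d ((i : ℕ) + 1)) := aevalTower_C _ _ _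
          rw [h1, hβd _ (by omega)]
          rw [show (Finset.univ.val.map w).esymm ((i : ℕ) + 1) = ε ((i : ℕ) + 1) from rfl, sub_self]
        simpa [RingHom.mem_ker] using hcomp
      intro a ha
      exact RingHom.mem_ker.mp (hle ha)
    set Ψ : (MvPolynomial (Fin m) B ⧸ J) →ₐ[R] (MvPolynomial (Fin (m+1)) R ⧸ I) :=
      Ideal.Quotient.liftₐ J ψ hkerΨ with hΨ
    have hΦmk : ∀ p, Φ (Ideal.Quotient.mk I p) = aeval g p := by
      intro p
      rw [hΦ]
      exact Ideal.Quotient.liftₐ_apply I (aeval g) hkerΦ (Ideal.Quotient.mk I p)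
    have hΨmk : ∀ p, Ψ (Ideal.Quotient.mk J p) = ψ p := by
      intro p
      rw [hΨ]
      exact Ideal.Quotient.liftₐ_apply J ψ hkerΨ (Ideal.Quotient.mk J p)
    have hΨΦ : ∀ a, Ψ (Φ a) = a := by
      have h : (Ψ.comp Φ) = AlgHom.id R (MvPolynomial (Fin (m+1)) R ⧸ I) := by
        apply Ideal.Quotient.algHom_ext
        apply MvPolynomial.algHom_ext
        intro i
        show Ψ (Φ (Ideal.Quotient.mk I (X i))) = Ideal.Quotient.mk I (X i)
        rw [hΦmk, aeval_X]
        refine Fin.cases ?_ ?_ i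
        · have hg0 : g 0 = algebraMap B _ ρ := by rw [hg]; exact Fin.cons_zero _ _
          rw [hg0, halgQ, hΨmk]
          have : ψ (C ρ) = β ρ := aevalTower_C _ _ _
          rw [this, hβρ, hx0]
        · intro j
          have hgs : g j.succ = Ideal.Quotient.mk J (X j) := by rw [hg]; exact Fin.cons_succ _ _ j
          rw [hgs, hΨmk]
          have : ψ (X j) = w j := aevalTower_X _ _ _
          rw [this, hw]
      intro a
      exact DFunLike.congr_fun h a
    have hΦsurj : Function.Surjective Φ := by
      have hX : ∀ j : Fin m, Ideal.Quotient.mk J (X j) ∈ Φ.range := by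
        intro j
        have h1 : Φ (Ideal.Quotient.mk I (X j.succ)) = Ideal.Quotient.mk J (X j) := by
          rw [hΦmk, aeval_X, hg]
          exact Fin.cons_succ _ _ j
        exact ⟨_, h1⟩
      have hρrange : Ideal.Quotient.mk J (C ρ) ∈ Φ.range := by
        have h1 : Φ (Ideal.Quotient.mk I (X 0)) = Ideal.Quotient.mk J (C ρ) := by
          rw [hΦmk, aeval_X, hg, ← halgQ]
          exact Fin.cons_zero _ _
        exact ⟨_, h1⟩
      have hB : ∀ b : B, Ideal.Quotient.mk J (C b) ∈ Φ.range := by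
        intro b
        obtain ⟨p, rfl⟩ := AdjoinRoot.mk_surjective b
        induction p using Polynomial.induction_on with
        | C r =>
          have h1 : (AdjoinRoot.mk f) (Polynomial.C r) = algebraMap R B r := by
            rw [AdjoinRoot.mk_C, ← AdjoinRoot.algebraMap_eq]
          rw [h1, show (C (algebraMap R B r) : MvPolynomial (Fin m) B)
              = algebraMap R (MvPolynomial (Fin m) B) r from rfl]
          rw [show Ideal.Quotient.mk J (algebraMap R (MvPolynomial (Fin m) B) r)
              = algebraMap R (MvPolynomial (Fin m) B ⧸ J) r from rfl]
          exact Subalgebra.algebraMap_mem _ r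
        | add p1 p2 hp1 hp2 =>
          rw [map_add, map_add]
          exact add_mem hp1 hp2
        | monomial n r ih =>
          rw [pow_succ, ← mul_assoc, map_mul, map_mul]
          have hXc : (AdjoinRoot.mk f) Polynomial.X = ρ := AdjoinRoot.mk_X
          rw [hXc]
          exact mul_mem ih hρrange
      have htop : ∀ y, y ∈ Φ.range := by
        intro y
        obtain ⟨qq, rfl⟩ := Ideal.Quotient.mk_surjective y
        induction qq using MvPolynomial.induction_on with
        | C b => exact hB b
        | add p1 p2 hp1 hp2 => rw [map_add]; exact add_mem hp1 hp2
        | mul_X p1 j hp1 => rw [map_mul]; exact mul_mem hp1 (hX j)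
      intro y
      obtain ⟨a, ha⟩ := htop y
      exact ⟨a, ha⟩
    have hΦbij : Function.Bijective Φ :=
      ⟨Function.LeftInverse.injective hΨΦ, hΦsurj⟩
    let e : (MvPolynomial (Fin (m+1)) R ⧸ I) ≃ₗ[R] (MvPolynomial (Fin m) B ⧸ J) :=
      LinearEquiv.ofBijective Φ.toLinearMap hΦbij
    let pb : PowerBasis R B := AdjoinRoot.powerBasis' hf
    have hdim : pb.dim = m + 1 := hfdeg
    let bB : Module.Basis (Fin (m+1)) R B := pb.basis.reindex (finCongr hdim)
    let btot : Module.Basis (Fin (m+1) × Fin (Nat.factorial m)) R (MvPolynomial (Fin m) B ⧸ J) :=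
      bB.smulTower bq
    exact ⟨(btot.map e.symm).reindex
      (finProdFinEquiv.trans (finCongr (Nat.factorial_succ m).symm))⟩

end CoinvariantProof

/-- The coinvariant algebra `K[v_1,…,v_n]/(e_1,…,e_n)` has dimension `n!`
as a `K`-vector space. -/
theorem finrank_coinvariantAlgebra (K : Type*) [Field K] [CharZero K] (n : ℕ) :
    Module.finrank K
      (MvPolynomial (Fin n) K ⧸
        Ideal.span (Set.range fun i : Fin n => MvPolynomial.esymm (Fin n) K ((i : ℕ) + 1))) =
      Nat.factorial n := by
  obtain ⟨b⟩ := CoinvariantProof.aux n K (fun _ => 0)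
  have hset : (Set.range fun i : Fin n => esymm (Fin n) K ((i : ℕ) + 1) - C ((fun _ => (0:K)) i))
      = (Set.range fun i : Fin n => esymm (Fin n) K ((i : ℕ) + 1)) := by
    simp
  rw [hset] at b
  rw [Module.finrank_eq_card_basis b, Fintype.card_fin]
end

section
/- Let A be an n×n matrix over a commutative ring, D = diag(v_1,…,v_n) a diagonal matrix of indeterminates, and write det(A+D−λI) = ∑_{i=0}^n C_i(v)(−λ)^{n−i}. Then for all 1 ≤ i ≤ n, S_i := C_i(v) − C_i(0) = ∑_{J ⊆ [n], 1 ≤ |J| ≤ i} ( ∑_{N ⊆ [n]∖J, |N| = i−|J|} det(A_N) ) v^J, where v^J = ∏_{j∈J} v_j and A_N is the principal submatrix of A on rows and columns indexed by N. -/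
/-!
By `Matrix.charpoly_coeff_eq_sum_minors`, `(-1)^i` times the coefficient of `λ^(n-i)` in the
characteristic polynomial of `A + D` is the sum of its `i × i` principal minors. Multilinearity
of the determinant in the rows expands the principal minor of `A + D` on `s` as
`∑_{N ⊆ s} det(A_N) v^(s \ N)`; regrouping the pairs `(s, N)` by `J = s \ N` gives the
coefficient of `v^J`, and the term `J = ∅` is the same expansion for `A` itself, which the
difference `S_i` cancels.
-/

open MvPolynomial Finset Matrix

variable {K : Type*} [CommRing K] {n : ℕ}

/-- The principal minor of `A` on the rows and columns indexed by `N`. -/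
noncomputable def principalMinor (A : Matrix (Fin n) (Fin n) K) (N : Finset (Fin n)) : K :=
  Matrix.det (A.submatrix (fun x : {x // x ∈ N} => (x : Fin n)) fun x : {x // x ∈ N} => (x : Fin n))

/-- The `i`-th spectral invariant `S_i = C_i(v) - C_i(0)` of `A`, where
`det(A + D - λI) = ∑_{i=0}^n C_i(v) (-λ)^{n-i}` and `D = diag(v_1,…,v_n)`;
equivalently `C_i(v) = (-1)^i ⬝ (coefficient of λ^{n-i} in the characteristic
polynomial of A + D)`. -/
noncomputable def spectralInvariant (A : Matrix (Fin n) (Fin n) K) (i : ℕ) :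
    MvPolynomial (Fin n) K :=
  (-1 : MvPolynomial (Fin n) K) ^ i *
    (((A.map MvPolynomial.C + Matrix.diagonal fun j => MvPolynomial.X j).charpoly).coeff (n - i)
      - MvPolynomial.C (A.charpoly.coeff (n - i)))

theorem Finset.sum_powersetCard_sum_powerset_sdiff {α β : Type*} [DecidableEq α]
    [AddCommMonoid β] (u : Finset α) (i : ℕ) (f : Finset α → Finset α → β) :
    ∑ s ∈ u.powersetCard i, ∑ N ∈ s.powerset, f (s \ N) N =
      ∑ J ∈ u.powerset.filter (fun J => J.card ≤ i),
        ∑ N ∈ (u \ J).powerset.filter (fun N => N.card = i - J.card), f J N := by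
  rw [sum_sigma', sum_sigma']
  refine sum_nbij' (fun x => ⟨x.1 \ x.2, x.2⟩) (fun y => ⟨y.1 ∪ y.2, y.2⟩) ?_ ?_ ?_ ?_
    fun _ _ => rfl
  · rintro ⟨s, N⟩ h
    simp only [mem_sigma, mem_powersetCard, mem_powerset, mem_filter] at h ⊢
    obtain ⟨⟨hsu, rfl⟩, hNs⟩ := h
    have := card_le_card hNs
    refine ⟨⟨sdiff_subset.trans hsu, ?_⟩, subset_sdiff.2 ⟨hNs.trans hsu, disjoint_sdiff⟩, ?_⟩
    all_goals rw [card_sdiff_of_subset hNs]; omega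
  · rintro ⟨J, N⟩ h
    simp only [mem_sigma, mem_powersetCard, mem_powerset, mem_filter] at h ⊢
    obtain ⟨⟨hJu, hJi⟩, hNJ, hN⟩ := h
    obtain ⟨hNu, hdisj⟩ := subset_sdiff.1 hNJ
    refine ⟨⟨union_subset hJu hNu, ?_⟩, subset_union_right⟩
    rw [card_union_of_disjoint hdisj.symm]; omega
  · rintro ⟨s, N⟩ h
    simp only [mem_sigma, mem_powersetCard, mem_powerset] at h
    simp [sdiff_union_of_subset h.2]
  · rintro ⟨J, N⟩ h
    simp only [mem_sigma, mem_powerset, mem_filter] at h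
    simp [union_sdiff_cancel_right (subset_sdiff.1 h.2.1).2.symm]

namespace Matrix

variable {ι R : Type*} [Fintype ι] [DecidableEq ι] [CommRing R]

theorem det_submatrix_add_diagonal (M : Matrix ι ι R) (d : ι → R) (s : Finset ι) :
    ((M + diagonal d).submatrix (Subtype.val : s → ι) Subtype.val).det =
      ∑ N ∈ s.powerset,
        (M.submatrix (Subtype.val : N → ι) Subtype.val).det * ∏ i ∈ s \ N, d i := by
  set e : ι → ι → R := (1 : Matrix ι ι R).row
  set m' : ι → ι → R := s.piecewise (fun i => d i • e i) e
  have hrows : s.piecewise (M + diagonal d).row e = s.piecewise (M.row + m') m' := by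
    refine s.piecewise_congr (fun i hi => ?_) fun i hi => (piecewise_eq_of_notMem _ _ _ hi).symm
    rw [Pi.add_apply, show m' i = d i • e i from piecewise_eq_of_mem _ _ _ hi]
    ext j
    simp [e, Matrix.one_apply, diagonal_apply]
  have hsplit (N : Finset ι) (hN : N ⊆ s) :
      N.piecewise M.row m' =
        (s \ N).piecewise (fun i => d i • N.piecewise M.row e i) (N.piecewise M.row e) := by
    ext i : 1
    by_cases hiN : i ∈ N
    · have : i ∉ s \ N := fun h => (mem_sdiff.1 h).2 hiN
      simp [hiN, this]
    · by_cases his : i ∈ s <;> simp [m', hiN, his]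
  rw [← det_piecewise_one_eq_submatrix_det, hrows]
  change (detRowAlternating : (ι → R) [⋀^ι]→ₗ[R] R).toMultilinearMap
    (s.piecewise (M.row + m') m') = _
  rw [MultilinearMap.map_piecewise_add]
  refine sum_congr rfl fun N hN => ?_
  rw [hsplit N (mem_powerset.1 hN), MultilinearMap.map_piecewise_smul, smul_eq_mul, mul_comm]
  congr 1
  exact det_piecewise_one_eq_submatrix_det M N

theorem neg_one_pow_mul_charpoly_coeff (M : Matrix ι ι R) {i : ℕ} (hi : i ≤ Fintype.card ι) :
    (-1) ^ i * M.charpoly.coeff (Fintype.card ι - i) =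
      ∑ s ∈ (univ : Finset ι).powersetCard i,
        (M.submatrix (Subtype.val : s → ι) Subtype.val).det := by
  rw [charpoly_coeff_eq_sum_minors _ _ hi, ← mul_assoc, ← pow_add, Even.neg_one_pow ⟨i, rfl⟩,
    one_mul]

theorem charpoly_coeff_add_diagonal (M : Matrix ι ι R) (d : ι → R) {i : ℕ}
    (hi : i ≤ Fintype.card ι) :
    (-1) ^ i * (M + diagonal d).charpoly.coeff (Fintype.card ι - i) =
      ∑ J ∈ univ.powerset.filter (fun J => J.card ≤ i),
        (∑ N ∈ (univ \ J).powerset.filter (fun N => N.card = i - J.card),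
          (M.submatrix (Subtype.val : N → ι) Subtype.val).det) * ∏ j ∈ J, d j := by
  rw [neg_one_pow_mul_charpoly_coeff _ hi]
  simp_rw [det_submatrix_add_diagonal, sum_mul]
  rw [← sum_powersetCard_sum_powerset_sdiff]

end Matrix

theorem spectralInvariant_eq_general (A : Matrix (Fin n) (Fin n) K) (i : ℕ)
    (hin : i ≤ n) :
    spectralInvariant A i =
      ∑ J ∈ Finset.univ.powerset.filter
          (fun J : Finset (Fin n) => 1 ≤ J.card ∧ J.card ≤ i),
        (∑ N ∈ (Finset.univ \ J).powerset.filter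
            (fun N : Finset (Fin n) => N.card = i - J.card),
          MvPolynomial.C (principalMinor A N)) * ∏ j ∈ J, MvPolynomial.X j := by
  have hi : i ≤ Fintype.card (Fin n) := by simpa using hin
  have hminor (N : Finset (Fin n)) :
      ((A.map C).submatrix (Subtype.val : N → Fin n) Subtype.val).det =
        (C (principalMinor A N) : MvPolynomial (Fin n) K) :=
    (RingHom.map_det C _).symm
  have hconst : (-1) ^ i * C (A.charpoly.coeff (n - i)) =
      ∑ N ∈ univ.powerset.filter (fun N : Finset (Fin n) => N.card = i),
        (C (principalMinor A N) : MvPolynomial (Fin n) K) := by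
    have hA := neg_one_pow_mul_charpoly_coeff A hi
    rw [Fintype.card_fin] at hA
    rw [← powersetCard_eq_filter, ← map_sum]
    simp [← hA, principalMinor]
  have hexpand := charpoly_coeff_add_diagonal (A.map C) (X : Fin n → MvPolynomial (Fin n) K) hi
  have hempty : ∅ ∈ univ.powerset.filter (fun J : Finset (Fin n) => J.card ≤ i) := by simp
  have hnonempty : (univ.powerset.filter (fun J : Finset (Fin n) => J.card ≤ i)).erase ∅ =
      univ.powerset.filter (fun J => 1 ≤ J.card ∧ J.card ≤ i) := by
    ext J
    simp [Nat.one_le_iff_ne_zero]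
  rw [Fintype.card_fin, ← add_sum_erase _ _ hempty, hnonempty] at hexpand
  simp only [sdiff_empty, card_empty, Nat.sub_zero, prod_empty, mul_one, hminor] at hexpand
  rw [spectralInvariant, mul_sub, hexpand, hconst, add_sub_cancel_left]

/-- Lemma 2.2: for `1 ≤ i ≤ n`,
`S_i = ∑_{J ⊆ [n], 1 ≤ |J| ≤ i} (∑_{N ⊆ [n] \ J, |N| = i - |J|} det(A_N)) v^J`. -/
theorem spectralInvariant_eq (A : Matrix (Fin n) (Fin n) K) (i : ℕ) (hi1 : 1 ≤ i)
    (hin : i ≤ n) :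
    spectralInvariant A i =
      ∑ J ∈ Finset.univ.powerset.filter
          (fun J : Finset (Fin n) => 1 ≤ J.card ∧ J.card ≤ i),
        (∑ N ∈ (Finset.univ \ J).powerset.filter
            (fun N : Finset (Fin n) => N.card = i - J.card),
          MvPolynomial.C (principalMinor A N)) * ∏ j ∈ J, MvPolynomial.X j :=
  spectralInvariant_eq_general A i hin
end

section
/- Let p ∈ K[v_1,…,v_n] be a monomial and write p = v_1^r · v where v is a monomial not divisible by v_1. Then in the Artin reduction of p (the unique K-linear combination of Artin monomials congruent to p modulo (e_1,…,e_n)), every Artin monomial that occurs with nonzero coefficient has v_1-exponent at least r. -/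
open MvPolynomial

/-- `X j ^ n` lies in the ideal generated by the elementary symmetric polynomials,
by the "characteristic polynomial" identity `∏ i (t - v_i) = Σ (-1)^k e_k t^{n-k}`
evaluated at `t = v_j`. -/
lemma X_pow_mem_esymm_span (K : Type*) [Field K] (n : ℕ) (j : Fin n) :
    (MvPolynomial.X j : MvPolynomial (Fin n) K) ^ n ∈
      Ideal.span (Set.range fun i : Fin n => MvPolynomial.esymm (Fin n) K ((i : ℕ) + 1)) := by
  have h := congrArg (Polynomial.aeval (-(MvPolynomial.X j : MvPolynomial (Fin n) K)))
    (MvPolynomial.prod_C_add_X_eq_sum_esymm K (Fin n))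
  rw [map_prod, map_sum] at h
  have hzero : (∏ i : Fin n, Polynomial.aeval (-(MvPolynomial.X j : MvPolynomial (Fin n) K))
      ((Polynomial.X + Polynomial.C (MvPolynomial.X i) : Polynomial (MvPolynomial (Fin n) K)))) = 0 := by
    apply Finset.prod_eq_zero (Finset.mem_univ j)
    simp
  rw [hzero] at h
  simp only [map_mul, map_pow, Polynomial.aeval_C, Polynomial.aeval_X, Fintype.card_fin] at h
  rw [Finset.sum_range_succ'] at h
  simp only [MvPolynomial.esymm_zero, map_one, one_mul, Nat.sub_zero,
    Algebra.algebraMap_self, RingHom.id_apply] at h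
  have hneg : (-(MvPolynomial.X j : MvPolynomial (Fin n) K)) ^ n =
      -∑ k ∈ Finset.range n,
        MvPolynomial.esymm (Fin n) K (k + 1) * (-MvPolynomial.X j) ^ (n - (k + 1)) := by
    linear_combination -h
  have hone : ((-1 : MvPolynomial (Fin n) K)) ^ n * (-1) ^ n = 1 := by
    rw [← mul_pow]; simp
  have hXj : (MvPolynomial.X j : MvPolynomial (Fin n) K) ^ n =
      (-1) ^ n * (-∑ k ∈ Finset.range n,
        MvPolynomial.esymm (Fin n) K (k + 1) * (-MvPolynomial.X j) ^ (n - (k + 1))) := by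
    rw [← hneg,
      show (-(MvPolynomial.X j : MvPolynomial (Fin n) K)) = (-1) * MvPolynomial.X j from by
        ring,
      mul_pow, ← mul_assoc, hone, one_mul]
  rw [hXj]
  refine Ideal.mul_mem_left _ _ (neg_mem (Ideal.sum_mem _ fun k hk => ?_))
  exact Ideal.mul_mem_right _ _
    (Ideal.subset_span ⟨⟨k, Finset.mem_range.mp hk⟩, rfl⟩)

/-- Lemma 2.7: let `p = v_1^r ⋅ v` be a monomial, where `r` is the exponent of the
first variable `v_1`.  In the Artin reduction of `p` — its unique expansion in the
basis of the coinvariant algebra `K[v_1,…,v_n]/(e_1,…,e_n)` given by the Artin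
monomials — every Artin monomial occurring with nonzero coefficient has
`v_1`-exponent at least `r`. -/
theorem artin_reduction_v1_exponent
    (K : Type*) [Field K] [CharZero K] (n : ℕ) (hn : 0 < n)
    (b : Module.Basis (∀ i : Fin n, Fin (n - (i : ℕ))) K
      (MvPolynomial (Fin n) K ⧸
        Ideal.span (Set.range fun i : Fin n => MvPolynomial.esymm (Fin n) K ((i : ℕ) + 1))))
    (hb : ∀ l : ∀ i : Fin n, Fin (n - (i : ℕ)),
      b l = Ideal.Quotient.mk _ (∏ i : Fin n, MvPolynomial.X i ^ ((l i : ℕ))))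
    (d : Fin n →₀ ℕ) (l : ∀ i : Fin n, Fin (n - (i : ℕ)))
    (hl : b.repr (Ideal.Quotient.mk _ (MvPolynomial.monomial d (1 : K))) l ≠ 0) :
    d ⟨0, hn⟩ ≤ (l ⟨0, hn⟩ : ℕ) := by
  let I : Ideal (MvPolynomial (Fin n) K) :=
    Ideal.span (Set.range fun i : Fin n => MvPolynomial.esymm (Fin n) K ((i : ℕ) + 1))
  set i0 : Fin n := ⟨0, hn⟩ with hi0
  -- key: multiplying any element of the quotient by `X i0 ^ r` lands in the span of
  -- Artin monomials whose first exponent is at least `r`.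
  have hspan : ∀ (r : ℕ) (q : MvPolynomial (Fin n) K ⧸ I),
      (Ideal.Quotient.mk I (MvPolynomial.X i0)) ^ r * q ∈
        Submodule.span K (b '' {l' | r ≤ ((l' i0 : ℕ))}) := by
    intro r q
    have hq : q ∈ Submodule.span K (Set.range b) := by rw [b.span_eq]; trivial
    refine Submodule.span_induction ?_ ?_ ?_ ?_ hq
    · rintro _ ⟨l', rfl⟩
      by_cases hc : r + (l' i0 : ℕ) < n
      · -- stays an Artin monomial
        have hlt : r + (l' i0 : ℕ) < n - ((i0 : ℕ)) := by
          simpa [hi0] using hc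
        set l'' : ∀ i : Fin n, Fin (n - (i : ℕ)) :=
          Function.update l' i0 ⟨r + (l' i0 : ℕ), hlt⟩ with hl''
        have hkey : (Ideal.Quotient.mk I (MvPolynomial.X i0)) ^ r * b l' = b l'' := by
          rw [hb, hb, ← map_pow, ← map_mul]
          congr 1
          have h1 : ((l'' i0 : ℕ)) = r + ((l' i0 : ℕ)) := by
            simp [hl'', Function.update_self]
          have h2 : ∀ i ∈ Finset.univ.erase i0,
              (MvPolynomial.X i : MvPolynomial (Fin n) K) ^ ((l'' i : ℕ))
                = (MvPolynomial.X i : MvPolynomial (Fin n) K) ^ ((l' i : ℕ)) :=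
            fun i hi => by
              rw [hl'', Function.update_of_ne (Finset.ne_of_mem_erase hi)]
          rw [← Finset.mul_prod_erase Finset.univ
                (fun i => (MvPolynomial.X i : MvPolynomial (Fin n) K) ^ ((l' i : ℕ))) (Finset.mem_univ i0),
              ← Finset.mul_prod_erase Finset.univ
                (fun i => (MvPolynomial.X i : MvPolynomial (Fin n) K) ^ ((l'' i : ℕ))) (Finset.mem_univ i0)]
          rw [Finset.prod_congr rfl h2, h1, ← mul_assoc, ← pow_add]
        rw [hkey]
        refine Submodule.subset_span ⟨l'', ?_, rfl⟩
        simp [hl'', Function.update_self]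
      · -- the first exponent is at least `n`, so the monomial reduces to zero
        have hkey : (Ideal.Quotient.mk I (MvPolynomial.X i0)) ^ r * b l' = 0 := by
          rw [hb, ← map_pow, ← map_mul, Ideal.Quotient.eq_zero_iff_mem]
          rw [← Finset.mul_prod_erase Finset.univ
                (fun i => (MvPolynomial.X i : MvPolynomial (Fin n) K) ^ ((l' i : ℕ))) (Finset.mem_univ i0),
              ← mul_assoc, ← pow_add]
          have hsplit : r + (l' i0 : ℕ) = n + (r + (l' i0 : ℕ) - n) := by omega
          rw [hsplit, pow_add]
          exact Ideal.mul_mem_right _ _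
            (Ideal.mul_mem_right _ _ (X_pow_mem_esymm_span K n i0))
        rw [hkey]
        exact Submodule.zero_mem _
    · rw [mul_zero]; exact Submodule.zero_mem _
    · intro x y _ _ hx hy
      rw [mul_add]; exact Submodule.add_mem _ hx hy
    · intro a x _ hx
      rw [mul_smul_comm]; exact Submodule.smul_mem _ _ hx
  -- decompose the monomial
  have hd : (MvPolynomial.monomial d (1 : K)) =
      MvPolynomial.X i0 ^ (d i0) * MvPolynomial.monomial (d.erase i0) 1 := by
    rw [MvPolynomial.X_pow_eq_monomial, MvPolynomial.monomial_mul, one_mul,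
      Finsupp.single_add_erase]
  have hmem := hspan (d i0) (Ideal.Quotient.mk I (MvPolynomial.monomial (d.erase i0) 1))
  rw [← map_pow, ← map_mul, ← hd] at hmem
  have := Module.Basis.repr_support_subset_of_mem_span b _ hmem
  exact this (Finsupp.mem_support_iff.mpr hl)
end

section
/- For all integers 1 ≤ m ≤ n: ∑_{j'=0}^{n−m} C(n−m, j') · (m−1+j')! · (n−m−j')! = (m−1)! · (n−m)! · C(n,m) = n!/m. -/
/-- For `1 ≤ m ≤ n`:
`∑_{j'=0}^{n−m} C(n−m, j')·(m−1+j')!·(n−m−j')! = (m−1)!·(n−m)!·C(n,m) = n!/m`. -/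
theorem factorial_binomial_sum (n m : ℕ) (hm : 1 ≤ m) (hmn : m ≤ n) :
    (∑ j ∈ Finset.range (n - m + 1),
        (n - m).choose j * Nat.factorial (m - 1 + j) * Nat.factorial (n - m - j)) =
        Nat.factorial (m - 1) * Nat.factorial (n - m) * n.choose m ∧
      m * (Nat.factorial (m - 1) * Nat.factorial (n - m) * n.choose m) =
        Nat.factorial n := by
  constructor
  · have key : ∀ j ∈ Finset.range (n - m + 1),
        (n - m).choose j * Nat.factorial (m - 1 + j) * Nat.factorial (n - m - j)
          = Nat.factorial (m - 1) * Nat.factorial (n - m) * (j + (m - 1)).choose (m - 1) := by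
      intro j hj
      rw [Finset.mem_range] at hj
      have hjN : j ≤ n - m := by omega
      have h1 : (n - m).choose j * Nat.factorial j * Nat.factorial (n - m - j)
          = Nat.factorial (n - m) := Nat.choose_mul_factorial_mul_factorial hjN
      have h2 : (m - 1 + j).choose (m - 1) * Nat.factorial (m - 1) * Nat.factorial j
          = Nat.factorial (m - 1 + j) := by
        have := Nat.choose_mul_factorial_mul_factorial (Nat.le_add_right (m - 1) j)
        simpa using this
      calc (n - m).choose j * Nat.factorial (m - 1 + j) * Nat.factorial (n - m - j)
          = (m - 1 + j).choose (m - 1) * Nat.factorial (m - 1) *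
              ((n - m).choose j * Nat.factorial j * Nat.factorial (n - m - j)) := by
            rw [← h2]; ring
        _ = Nat.factorial (m - 1) * Nat.factorial (n - m) * (j + (m - 1)).choose (m - 1) := by
            rw [h1, Nat.add_comm j (m-1)]; ring
    rw [Finset.sum_congr rfl key, ← Finset.mul_sum, Nat.sum_range_add_choose]
    congr 2
    · omega
    · omega
  · have h1 : m * Nat.factorial (m - 1) = Nat.factorial m :=
      Nat.mul_factorial_pred (by omega)
    calc m * (Nat.factorial (m - 1) * Nat.factorial (n - m) * n.choose m)
        = n.choose m * (m * Nat.factorial (m - 1)) * Nat.factorial (n - m) := by ring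
      _ = n.choose m * Nat.factorial m * Nat.factorial (n - m) := by rw [h1]
      _ = Nat.factorial n := Nat.choose_mul_factorial_mul_factorial hmn
end

section
/- Define λ_{k,j} := m·(−1)^{j+1}·(m+k−j−1)!·(n−m−k+j)! for integers 1 ≤ m ≤ n, 0 ≤ k ≤ n−m, 0 ≤ j ≤ min(k,m). Then for every k ≥ 1: ∑_{j=0}^{min(k,m)} λ_{k,j} · C(m,j) · C(n−m, k−j) = 0. -/
open Finset PowerSeries

lemma coeff_one_sub_pow (m j : ℕ) :
    (PowerSeries.coeff (R := ℤ) j) ((1 - PowerSeries.X) ^ m) = (-1) ^ j * m.choose j := by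
  rw [sub_pow, map_sum]
  simp only [one_pow]
  have hterm : ∀ x, (PowerSeries.coeff (R := ℤ) j)
      ((-1) ^ (x + m) * 1 * PowerSeries.X ^ (m - x) * ((m.choose x : ℤ⟦X⟧)))
      = (-1) ^ (x + m) * (m.choose x : ℤ) * (if j = m - x then 1 else 0) := by
    intro x
    have h1 : ((-1 : ℤ⟦X⟧) ^ (x + m) * 1 * PowerSeries.X ^ (m - x) * ((m.choose x : ℤ⟦X⟧)))
        = PowerSeries.C (R := ℤ) ((-1) ^ (x + m) * (m.choose x : ℤ)) * PowerSeries.X ^ (m - x) := by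
      rw [map_mul, map_pow, map_neg, map_one]
      rw [map_natCast]
      ring
    rw [h1, PowerSeries.coeff_C_mul, PowerSeries.coeff_X_pow]
  rw [Finset.sum_congr rfl fun x _ => hterm x]
  rcases le_or_gt j m with h | h
  · rw [Finset.sum_eq_single (m - j)]
    · rw [if_pos (by omega), Nat.choose_symm h]
      have hpar : (-1 : ℤ) ^ (m - j + m) = (-1) ^ j := by
        have h2 : m - j + m = j + 2 * (m - j) := by omega
        rw [h2, pow_add, pow_mul]
        simp
      rw [hpar]; ring
    · intro b hb hne
      rw [Finset.mem_range] at hb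
      rw [if_neg (by omega), mul_zero]
    · intro h'
      exact absurd (Finset.mem_range.mpr (by omega)) h'
  · rw [Nat.choose_eq_zero_of_lt h]
    push_cast
    rw [mul_zero]
    apply Finset.sum_eq_zero
    intro x hx
    rw [Finset.mem_range] at hx
    rw [if_neg (by omega), mul_zero]

lemma key_sum (m k : ℕ) (hm : 1 ≤ m) (hk : 1 ≤ k) :
    ∑ j ∈ Finset.range (k + 1),
      (-1 : ℤ) ^ j * (m.choose j) * (((m - 1 + (k - j)).choose (k - j)) : ℤ) = 0 := by
  have hmul : ((1 - PowerSeries.X : ℤ⟦X⟧) ^ m) * (invOneSubPow ℤ m).val = 1 := by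
    rw [← invOneSubPow_inv_eq_one_sub_pow]
    exact (invOneSubPow ℤ m).inv_val
  have h := congrArg (PowerSeries.coeff (R := ℤ) k) hmul
  rw [PowerSeries.coeff_mul, PowerSeries.coeff_one, if_neg (by omega)] at h
  rw [Finset.Nat.sum_antidiagonal_eq_sum_range_succ_mk] at h
  rw [invOneSubPow_val_eq_mk_sub_one_add_choose_of_pos ℤ m hm] at h
  simp only [coeff_one_sub_pow, PowerSeries.coeff_mk] at h
  rw [← h]
  apply Finset.sum_congr rfl
  intro j hj
  rw [Nat.choose_symm_add]


/-- With `λ_{k,j} = m·(−1)^{j+1}·(m+k−j−1)!·(n−m−k+j)!`, for every `k ≥ 1` we have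
`∑_{j=0}^{min(k,m)} λ_{k,j}·C(m,j)·C(n−m, k−j) = 0`. -/
theorem lambda_sum_eq_zero (n m k : ℕ) (hm : 1 ≤ m) (hmn : m ≤ n)
    (hk1 : 1 ≤ k) (hk : k ≤ n - m) :
    ∑ j ∈ Finset.range (min k m + 1),
      ((m : ℤ) * (-1) ^ (j + 1) * Nat.factorial (m + k - j - 1) *
          Nat.factorial (n - m - k + j)) *
        (m.choose j) * ((n - m).choose (k - j)) = 0 := by
  have hterm : ∀ j ∈ Finset.range (min k m + 1),
      ((m : ℤ) * (-1) ^ (j + 1) * Nat.factorial (m + k - j - 1) *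
          Nat.factorial (n - m - k + j)) * (m.choose j) * ((n - m).choose (k - j))
      = (-((m : ℤ) * Nat.factorial (m - 1) * Nat.factorial (n - m))) *
          ((-1) ^ j * (m.choose j) * (((m - 1 + (k - j)).choose (k - j)) : ℤ)) := by
    intro j hj
    rw [Finset.mem_range] at hj
    have hjk : j ≤ k := by omega
    have hjm : j ≤ m := by omega
    -- factorial identity 1
    have h1 : Nat.factorial (m + k - j - 1)
        = (m - 1 + (k - j)).choose (k - j) * Nat.factorial (k - j) * Nat.factorial (m - 1) := by
      have := Nat.choose_mul_factorial_mul_factorial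
        (show k - j ≤ m - 1 + (k - j) by omega)
      rw [show m - 1 + (k - j) - (k - j) = m - 1 by omega] at this
      rw [show m + k - j - 1 = m - 1 + (k - j) by omega, ← this]
    -- factorial identity 2
    have h2 : ((n - m).choose (k - j)) * Nat.factorial (k - j) * Nat.factorial (n - m - k + j)
        = Nat.factorial (n - m) := by
      have := Nat.choose_mul_factorial_mul_factorial
        (show k - j ≤ n - m by omega)
      rw [show n - m - (k - j) = n - m - k + j by omega] at this
      exact this
    have h2' : (((n - m).choose (k - j)) : ℤ) * (Nat.factorial (k - j) : ℤ) *
        (Nat.factorial (n - m - k + j) : ℤ) = (Nat.factorial (n - m) : ℤ) := by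
      exact_mod_cast congrArg (Nat.cast : ℕ → ℤ) h2
    rw [h1]
    push_cast
    linear_combination ((-1 : ℤ) ^ (j + 1) * m * (Nat.factorial (m - 1) : ℤ) *
      (((m - 1 + (k - j)).choose (k - j)) : ℤ) * ((m.choose j) : ℤ)) * h2'
  rw [Finset.sum_congr rfl hterm, ← Finset.mul_sum]
  have hext : ∑ j ∈ Finset.range (min k m + 1),
      ((-1 : ℤ) ^ j * (m.choose j) * (((m - 1 + (k - j)).choose (k - j)) : ℤ))
      = ∑ j ∈ Finset.range (k + 1),
      ((-1 : ℤ) ^ j * (m.choose j) * (((m - 1 + (k - j)).choose (k - j)) : ℤ)) := by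
    apply Finset.sum_subset
    · apply Finset.range_subset_range.mpr; omega
    · intro x hx hxn
      rw [Finset.mem_range] at hx
      simp only [Finset.mem_range, not_lt] at hxn
      rw [Nat.choose_eq_zero_of_lt (by omega)]
      push_cast; ring
  rw [hext, key_sum m k hm hk1, mul_zero]
end
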